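/- arXiv:1803.06637 — 2 statements merged into one kernel-verified Lean document; each statement's English description precedes it below -/
import Mathlib

section
/- Let $q \in (0,1)$ and $\lambda_+, \lambda_- > 0$. Define $\mathcal{H}(a,b) = \tfrac{1}{2} b^2 + \tfrac{\lambda_+}{q}(a^+)^q + \tfrac{\lambda_-}{q}(a^-)^q$ for $a, b \in \mathbb{R}$, where $a^+ = \max\{a,0\}$ and $a^- = \max\{-a,0\}$. If $w : \mathbb{R} \to \mathbb{R}$ is continuously differentiable, $w(0) = w'(0) = 0$, and $\mathcal{H}(w(t), w'(t))$ is constant in $t$, then $w \equiv 0$ on $\mathbb{R}$. -/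
open Set

/-- If `w : ℝ → ℝ` is `C¹`, `w 0 = 0`, `w' 0 = 0`, and the Hamiltonian
`H(a,b) = b²/2 + (λ₊/q)(a⁺)^q + (λ₋/q)(a⁻)^q` is constant along `(w, w')`,
then `w ≡ 0`. -/
theorem stmt0 (q lp lm : ℝ) (hq : q ∈ Set.Ioo (0:ℝ) 1) (hlp : 0 < lp) (hlm : 0 < lm)
    (H : ℝ → ℝ → ℝ)
    (hH : ∀ a b : ℝ, H a b = b ^ 2 / 2 + lp / q * (max a 0) ^ q + lm / q * (max (-a) 0) ^ q)
    (w : ℝ → ℝ) (hw : ContDiff ℝ 1 w) (h0 : w 0 = 0) (h0' : deriv w 0 = 0)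
    (hconst : ∀ s t : ℝ, H (w s) (deriv w s) = H (w t) (deriv w t)) :
    ∀ t : ℝ, w t = 0 := by
  intro t
  have hq0 : q ≠ 0 := ne_of_gt hq.1
  have hzero : H (w t) (deriv w t) = 0 := by
    have := hconst t 0
    rw [this, hH, h0, h0']
    simp [Real.zero_rpow hq0]
  rw [hH] at hzero
  have hb : (0:ℝ) ≤ (deriv w t) ^ 2 / 2 := by positivity
  have hp : (0:ℝ) ≤ (max (w t) 0) ^ q := Real.rpow_nonneg (le_max_right _ _) q
  have hm : (0:ℝ) ≤ (max (-w t) 0) ^ q := Real.rpow_nonneg (le_max_right _ _) q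
  have hcp : 0 < lp / q := div_pos hlp hq.1
  have hcm : 0 < lm / q := div_pos hlm hq.1
  have hp0 : (max (w t) 0) ^ q = 0 := by nlinarith [mul_nonneg hcp.le hp, mul_nonneg hcm.le hm]
  have hm0 : (max (-w t) 0) ^ q = 0 := by nlinarith [mul_nonneg hcp.le hp, mul_nonneg hcm.le hm]
  have h1 : max (w t) 0 = 0 :=
    (Real.rpow_eq_zero (le_max_right _ _) hq0).mp hp0
  have h2 : max (-w t) 0 = 0 :=
    (Real.rpow_eq_zero (le_max_right _ _) hq0).mp hm0
  have := max_eq_right_iff.mp h1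
  have := max_eq_right_iff.mp h2
  linarith
end

section
/- Let $q \in (0,1)$ and let $v : \mathbb{R} \to \mathbb{R}$ be continuous with $v(0) = 0$, $v'$ exists and $v'(0) = 0$, and suppose $v$ is $\gamma$-homogeneous for some $\gamma > 0$ and satisfies $-v'' = \mu(\lambda_+ (v^+)^{q-1} - \lambda_-(v^-)^{q-1})$ on $\{v \ne 0\}$ with $\mu, \lambda_\pm > 0$, together with constancy of the Hamiltonian $\mathcal{H}(v,v') = \tfrac12 (v')^2 + \tfrac{\mu\lambda_+}{q}(v^+)^q + \tfrac{\mu\lambda_-}{q}(v^-)^q$. Then $v \equiv 0$. Consequently, there is no one-dimensional nontrivial homogeneous stationary profile vanishing to first order at the origin, and the singular set of solutions in $\mathbb{R}^N$ has Hausdorff dimension at most $N - 2$. -/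
open Set

/-- a one-dimensional `γ`-homogeneous profile vanishing to first
order at the origin, solving `-v'' = μ(λ₊(v⁺)^{q-1} - λ₋(v⁻)^{q-1})` off its zero
set and with constant Hamiltonian, is identically zero. -/
theorem stmt14 (q mu lp lm γ : ℝ) (hq : q ∈ Set.Ioo (0:ℝ) 1)
    (hmu : 0 < mu) (hlp : 0 < lp) (hlm : 0 < lm) (hγ : 0 < γ)
    (v : ℝ → ℝ) (hv : Continuous v) (hv' : Differentiable ℝ v)
    (h0 : v 0 = 0) (h0' : deriv v 0 = 0)
    (hhom : ∀ l > (0:ℝ), ∀ t : ℝ, v (l * t) = l ^ γ * v t)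
    (hode : ∀ t : ℝ, v t ≠ 0 →
      deriv (deriv v) t
        = -(mu * (lp * (max (v t) 0) ^ (q - 1) - lm * (max (-(v t)) 0) ^ (q - 1))))
    (hH : ∀ s t : ℝ,
      (deriv v s) ^ 2 / 2 + mu * lp / q * (max (v s) 0) ^ q
          + mu * lm / q * (max (-(v s)) 0) ^ q
        = (deriv v t) ^ 2 / 2 + mu * lp / q * (max (v t) 0) ^ q
          + mu * lm / q * (max (-(v t)) 0) ^ q) :
    ∀ t : ℝ, v t = 0 := by
  obtain ⟨hq0, hq1⟩ := hq
  intro t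
  have hz := hH t 0
  rw [h0, h0', neg_zero, max_self, Real.zero_rpow (ne_of_gt hq0)] at hz
  simp only [mul_zero, add_zero, ne_eq, OfNat.ofNat_ne_zero, not_false_eq_true,
    zero_pow, zero_div, zero_add] at hz
  have hcp : 0 < mu * lp / q := by positivity
  have hcm : 0 < mu * lm / q := by positivity
  have h1 : (0:ℝ) ≤ (deriv v t) ^ 2 / 2 := by positivity
  have h2 : (0:ℝ) ≤ mu * lp / q * (max (v t) 0) ^ q := by
    have := Real.rpow_nonneg (le_max_right (v t) 0) q
    positivity
  have h3 : (0:ℝ) ≤ mu * lm / q * (max (-(v t)) 0) ^ q := by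
    have := Real.rpow_nonneg (le_max_right (-(v t)) 0) q
    positivity
  have e2 : mu * lp / q * (max (v t) 0) ^ q = 0 := by linarith
  have e3 : mu * lm / q * (max (-(v t)) 0) ^ q = 0 := by linarith
  have m2 : (max (v t) 0) ^ q = 0 := by
    rcases mul_eq_zero.1 e2 with h | h
    · exact absurd h (ne_of_gt hcp)
    · exact h
  have m3 : (max (-(v t)) 0) ^ q = 0 := by
    rcases mul_eq_zero.1 e3 with h | h
    · exact absurd h (ne_of_gt hcm)
    · exact h
  have hvle : v t ≤ 0 := by
    by_contra h
    push_neg at h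
    rw [max_eq_left h.le] at m2
    exact absurd m2 (ne_of_gt (Real.rpow_pos_of_pos h q))
  have hvge : 0 ≤ v t := by
    by_contra h
    push_neg at h
    have : 0 < -(v t) := by linarith
    rw [max_eq_left this.le] at m3
    exact absurd m3 (ne_of_gt (Real.rpow_pos_of_pos this q))
  linarith
end
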